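/- arXiv:1807.09727 — 3 statements merged into one kernel-verified Lean document; each statement's English description precedes it below -/
import Mathlib

section
/- Let Ω ⊆ ℝ^N (N ≥ 3) be an open set, let b, c : Ω → ℝ be continuous with c ≥ 0, and suppose u ∈ C²(Ω) is a positive classical supersolution of −Δu + b(x)|∇u| = c(x)u on Ω, i.e. u > 0 and −Δu(x) + b(x)|∇u(x)| ≥ c(x)u(x) for all x ∈ Ω. Then for every t > 1/2 and every test function φ ∈ C_c^∞(Ω) we have ∫_Ω c φ² dx ≤ 2t ∫_Ω |∇φ|² dx + (t/(2(2t−1))) ∫_Ω b² φ² dx. -/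
/-!
Test the supersolution inequality against `ψ = φ² / u`. Integrating `-Δu · ψ` by parts turns it
into `∫ ∇ψ · ∇u = ∫ (2 φ / u) ∇φ · ∇u - (φ / u)² |∇u|²`. With `s = |φ| |∇u| / u`, the resulting
integrand is at most `(|b| |φ| + 2 |∇φ|) s - s² ≤ (|b| |φ| / 2 + |∇φ|)²`, and the weighted Young
inequality `(X + Y)² ≤ 2t Y² + 2t / (2t - 1) X²` (valid for `t > 1/2`) gives the bound.
-/

open MeasureTheory

/-- The Laplacian of a function on Euclidean space. -/
noncomputable def lap {N : ℕ} (f : EuclideanSpace ℝ (Fin N) → ℝ)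
    (x : EuclideanSpace ℝ (Fin N)) : ℝ :=
  ∑ i, fderiv ℝ (fun y => fderiv ℝ f y (EuclideanSpace.single i 1)) x (EuclideanSpace.single i 1)

theorem add_mul_sub_sq_le {t : ℝ} (ht : 1 / 2 < t) (a p s : ℝ) :
    (a + 2 * p) * s - s ^ 2 ≤ 2 * t * p ^ 2 + t / (2 * (2 * t - 1)) * a ^ 2 := by
  have hε : 0 < 2 * t - 1 := by linarith
  have hgap : 2 * t * p ^ 2 + t / (2 * (2 * t - 1)) * a ^ 2 - (a / 2 + p) ^ 2 =
      ((2 * t - 1) * p - a / 2) ^ 2 / (2 * t - 1) := by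
    field_simp
    ring
  have hgap_nonneg : 0 ≤ ((2 * t - 1) * p - a / 2) ^ 2 / (2 * t - 1) := by positivity
  nlinarith [sq_nonneg (s - a / 2 - p)]

theorem mul_norm_add_inner_sub_le {V : Type*} [NormedAddCommGroup V] [InnerProductSpace ℝ V]
    {t : ℝ} (ht : 1 / 2 < t) (β a : ℝ) {u : ℝ} (hu : 0 < u) (g w : V) :
    β * ‖w‖ * (a ^ 2 / u) + (2 * a / u * inner ℝ g w - a ^ 2 / u ^ 2 * ‖w‖ ^ 2) ≤
      2 * t * ‖g‖ ^ 2 + t / (2 * (2 * t - 1)) * (β ^ 2 * a ^ 2) := by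
  set s := |a| * ‖w‖ / u
  have h1 : β * ‖w‖ * (a ^ 2 / u) ≤ |β| * |a| * s := by
    calc β * ‖w‖ * (a ^ 2 / u) = β * (‖w‖ * a ^ 2 / u) := by ring
      _ ≤ |β| * (‖w‖ * a ^ 2 / u) := mul_le_mul_of_nonneg_right (le_abs_self β) (by positivity)
      _ = |β| * |a| * s := by rw [← sq_abs a]; ring
  have h2 : 2 * a / u * inner ℝ g w ≤ 2 * ‖g‖ * s := by
    have hcs : a * inner ℝ g w ≤ |a| * (‖g‖ * ‖w‖) :=
      (le_abs_self _).trans ((abs_mul _ _).trans_le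
        (mul_le_mul_of_nonneg_left (abs_real_inner_le_norm g w) (abs_nonneg a)))
    calc 2 * a / u * inner ℝ g w = 2 / u * (a * inner ℝ g w) := by ring
      _ ≤ 2 / u * (|a| * (‖g‖ * ‖w‖)) := mul_le_mul_of_nonneg_left hcs (by positivity)
      _ = 2 * ‖g‖ * s := by ring
  have h3 : a ^ 2 / u ^ 2 * ‖w‖ ^ 2 = s ^ 2 := by rw [← sq_abs a]; ring
  have hyoung := add_mul_sub_sq_le ht (|β| * |a|) ‖g‖ s
  rw [mul_pow, sq_abs, sq_abs] at hyoung
  linarith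

theorem fderiv_sq_div_apply {E : Type*} [NormedAddCommGroup E] [NormedSpace ℝ E] {φ u : E → ℝ}
    {x : E} (hφ : DifferentiableAt ℝ φ x) (hu : DifferentiableAt ℝ u x) (hux : u x ≠ 0) (v : E) :
    fderiv ℝ (fun y => φ y ^ 2 / u y) x v =
      2 * φ x / u x * fderiv ℝ φ x v - φ x ^ 2 / u x ^ 2 * fderiv ℝ u x v := by
  have hinv : HasFDerivAt (fun y => (u y)⁻¹) _ x := (hasFDerivAt_inv hux).comp x hu.hasFDerivAt
  simp only [div_eq_mul_inv]
  rw [((hφ.hasFDerivAt.pow 2).fun_mul hinv).fderiv]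
  simp only [Nat.add_one_sub_one, pow_one, nsmul_eq_mul, Nat.cast_ofNat, add_apply, smul_apply,
    ContinuousLinearMap.comp_apply, ContinuousLinearMap.toSpanSingleton_apply, smul_eq_mul, mul_neg]
  field_simp
  ring

theorem mul_norm_gradient_add_fderiv_sq_div_le {E : Type*} [NormedAddCommGroup E]
    [InnerProductSpace ℝ E] [CompleteSpace E] {t : ℝ} (ht : 1 / 2 < t) (β : ℝ) {φ u : E → ℝ}
    {x : E} (hφ : DifferentiableAt ℝ φ x) (hu : DifferentiableAt ℝ u x) (hux : 0 < u x) :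
    β * ‖gradient u x‖ * (φ x ^ 2 / u x) +
        fderiv ℝ (fun y => φ y ^ 2 / u y) x (gradient u x) ≤
      2 * t * ‖gradient φ x‖ ^ 2 + t / (2 * (2 * t - 1)) * (β ^ 2 * φ x ^ 2) := by
  rw [fderiv_sq_div_apply hφ hu hux.ne', ← inner_gradient_left, ← inner_gradient_left,
    real_inner_self_eq_norm_sq]
  exact mul_norm_add_inner_sub_le ht β (φ x) hux _ _

theorem ContinuousOn.integrableOn_of_eq_zero_off_compact {X E : Type*} [TopologicalSpace X]
    [T2Space X] [MeasurableSpace X] [OpensMeasurableSpace X] {μ : Measure X}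
    [IsFiniteMeasureOnCompacts μ]
    [NormedAddCommGroup E] {f : X → E} {s K : Set X} (hf : ContinuousOn f s) (hK : IsCompact K)
    (hKs : K ⊆ s) (hs : MeasurableSet s) (h0 : ∀ x ∉ K, f x = 0) : IntegrableOn f s μ :=
  ((hf.mono hKs).integrableOn_compact hK).of_forall_sdiff_eq_zero hs fun x hx => h0 x hx.2

theorem ContDiffOn.contDiff_of_tsupport_subset {𝕜 E F : Type*} [NontriviallyNormedField 𝕜]
    [NormedAddCommGroup E] [NormedSpace 𝕜 E] [NormedAddCommGroup F] [NormedSpace 𝕜 F]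
    {f : E → F} {s : Set E} {n : WithTop ℕ∞} (hf : ContDiffOn 𝕜 n f s) (hs : IsOpen s)
    (hfs : tsupport f ⊆ s) : ContDiff 𝕜 n f := by
  refine contDiff_iff_contDiffAt.2 fun x => ?_
  by_cases hx : x ∈ s
  · exact hf.contDiffAt (hs.mem_nhds hx)
  · exact contDiffAt_const.congr_of_eventuallyEq
      (notMem_tsupport_iff_eventuallyEq.1 fun h => hx (hfs h))

theorem ContDiffOn.contDiffOn_fderiv_apply {𝕜 E F : Type*} [NontriviallyNormedField 𝕜]
    [NormedAddCommGroup E] [NormedSpace 𝕜 E] [NormedAddCommGroup F] [NormedSpace 𝕜 F]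
    {f : E → F} {s : Set E} {m n : WithTop ℕ∞} (hf : ContDiffOn 𝕜 m f s) (hs : IsOpen s)
    (hmn : n + 1 ≤ m) (v : E) : ContDiffOn 𝕜 n (fun y => fderiv 𝕜 f y v) s :=
  (hf.fderiv_of_isOpen hs hmn).clm_apply contDiffOn_const

theorem integral_fderiv_apply_eq_zero {E G : Type*} [NormedAddCommGroup E] [NormedSpace ℝ E]
    [FiniteDimensional ℝ E] [MeasurableSpace E] [BorelSpace E] {μ : Measure E}
    [μ.IsAddHaarMeasure] [NormedAddCommGroup G] [NormedSpace ℝ G] {F : E → G}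
    (hF : ContDiff ℝ 1 F) (hFc : HasCompactSupport F) (v : E) :
    ∫ x, fderiv ℝ F x v ∂μ = 0 := by
  have h := integral_smul_fderiv_eq_neg_fderiv_smul_of_integrable (μ := μ) (f := fun _ => (1 : ℝ))
    (g := F) (v := v) (by simp) (by simpa using ((hF.continuous_fderiv one_ne_zero).clm_apply
      continuous_const).integrable_of_hasCompactSupport (hFc.fderiv_apply (𝕜 := ℝ) v))
    (by simpa using hF.continuous.integrable_of_hasCompactSupport hFc)
    (fun x _ => differentiableAt_const _) (fun x _ => hF.differentiable one_ne_zero x)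
  simpa using h

theorem OrthonormalBasis.apply_gradient_eq_sum {ι E : Type*} [Fintype ι] [NormedAddCommGroup E]
    [InnerProductSpace ℝ E] [CompleteSpace E] (b : OrthonormalBasis ι ℝ E) (f : E → ℝ) (x : E)
    (L : E →L[ℝ] ℝ) : L (gradient f x) = ∑ i, fderiv ℝ f x (b i) * L (b i) := by
  conv_lhs => rw [← b.sum_repr' (gradient f x)]
  simp

theorem ContDiffOn.continuousOn_gradient {E : Type*} [NormedAddCommGroup E]
    [InnerProductSpace ℝ E] [CompleteSpace E] {f : E → ℝ} {s : Set E} (hf : ContDiffOn ℝ 1 f s)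
    (hs : IsOpen s) : ContinuousOn (gradient f) s :=
  (InnerProductSpace.toDual ℝ E).symm.continuous.comp_continuousOn
    (hf.continuousOn_fderiv_of_isOpen hs le_rfl)

section Euclidean

variable {N : ℕ} {Ω : Set (EuclideanSpace ℝ (Fin N))} {u ψ : EuclideanSpace ℝ (Fin N) → ℝ}

theorem ContDiffOn.continuousOn_lap (hΩ : IsOpen Ω) (hu : ContDiffOn ℝ 2 u Ω) :
    ContinuousOn (lap u) Ω :=
  continuousOn_finsetSum _ fun _ _ =>
    ((hu.contDiffOn_fderiv_apply hΩ (by norm_num) _).continuousOn_fderiv_of_isOpen hΩ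
      le_rfl).clm_apply continuousOn_const

theorem sum_fderiv_mul_partial_eq_mul_lap_add (hΩ : IsOpen Ω) (hu : ContDiffOn ℝ 2 u Ω)
    (hψ : ContDiffOn ℝ 1 ψ Ω) {x : EuclideanSpace ℝ (Fin N)} (hx : x ∈ Ω) :
    ∑ i, fderiv ℝ (fun y => ψ y * fderiv ℝ u y (EuclideanSpace.single i 1)) x
        (EuclideanSpace.single i 1) =
      ψ x * lap u x + fderiv ℝ ψ x (gradient u x) := by
  have hψx : DifferentiableAt ℝ ψ x :=
    (hψ.differentiableOn one_ne_zero).differentiableAt (hΩ.mem_nhds hx)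
  have hux : ∀ v, DifferentiableAt ℝ (fun y => fderiv ℝ u y v) x := fun v =>
    ((hu.contDiffOn_fderiv_apply hΩ (by norm_num) v).differentiableOn
      one_ne_zero).differentiableAt (hΩ.mem_nhds hx)
  simp_rw [fderiv_fun_mul hψx (hux _)]
  rw [(EuclideanSpace.basisFun _ ℝ).apply_gradient_eq_sum, lap, Finset.mul_sum,
    ← Finset.sum_add_distrib]
  simp

theorem integral_mul_lap_add_fderiv_gradient_eq_zero (hΩ : IsOpen Ω) (hu : ContDiffOn ℝ 2 u Ω)
    (hψ : ContDiffOn ℝ 1 ψ Ω) (hψc : HasCompactSupport ψ) (hψΩ : tsupport ψ ⊆ Ω) :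
    ∫ x in Ω, (ψ x * lap u x + fderiv ℝ ψ x (gradient u x)) = 0 := by
  set e : Fin N → EuclideanSpace ℝ (Fin N) := fun i => EuclideanSpace.single i 1
  set F : Fin N → EuclideanSpace ℝ (Fin N) → ℝ := fun i y => ψ y * fderiv ℝ u y (e i)
  have hFψ : ∀ i, tsupport (F i) ⊆ tsupport ψ := fun i => tsupport_mul_subset_left
  have hF : ∀ i, ContDiff ℝ 1 (F i) := fun i =>
    (hψ.mul (hu.contDiffOn_fderiv_apply hΩ (by norm_num) _)).contDiff_of_tsupport_subset hΩ
      ((hFψ i).trans hψΩ)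
  have hFc : ∀ i, HasCompactSupport (F i) := fun i => hψc.mul_right
  have hvanish : ∀ x ∉ tsupport ψ, ψ x = 0 ∧ fderiv ℝ ψ x = 0 := fun x hx =>
    ⟨image_eq_zero_of_notMem_tsupport hx, fderiv_of_notMem_tsupport ℝ hx⟩
  have hdiv : ∀ x, ∑ i, fderiv ℝ (F i) x (e i) = ψ x * lap u x + fderiv ℝ ψ x (gradient u x) := by
    intro x
    by_cases hx : x ∈ tsupport ψ
    · exact sum_fderiv_mul_partial_eq_mul_lap_add hΩ hu hψ (hψΩ hx)
    · simp [hvanish x hx, fderiv_of_notMem_tsupport ℝ (fun h => hx (hFψ _ h))]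
  calc ∫ x in Ω, (ψ x * lap u x + fderiv ℝ ψ x (gradient u x))
      = ∫ x, ∑ i, fderiv ℝ (F i) x (e i) := by
        simp_rw [hdiv]
        refine setIntegral_eq_integral_of_forall_compl_eq_zero fun x hx => ?_
        simp [hvanish x fun h => hx (hψΩ h)]
    _ = ∑ i, ∫ x, fderiv ℝ (F i) x (e i) := integral_finsetSum _ fun i _ =>
        (((hF i).continuous_fderiv one_ne_zero).clm_apply
          continuous_const).integrable_of_hasCompactSupport ((hFc i).fderiv_apply (𝕜 := ℝ) _)
    _ = 0 := Finset.sum_eq_zero fun i _ => integral_fderiv_apply_eq_zero (hF i) (hFc i) _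

theorem integral_mul_mul_le_of_supersolution {b c : EuclideanSpace ℝ (Fin N) → ℝ} (hΩ : IsOpen Ω)
    (hb : ContinuousOn b Ω) (hc : ContinuousOn c Ω) (hu : ContDiffOn ℝ 2 u Ω)
    (hsuper : ∀ x ∈ Ω, c x * u x ≤ -(lap u x) + b x * ‖gradient u x‖)
    (hψ : ContDiffOn ℝ 1 ψ Ω) (hψc : HasCompactSupport ψ) (hψΩ : tsupport ψ ⊆ Ω)
    (hψ0 : ∀ x ∈ Ω, 0 ≤ ψ x) :
    ∫ x in Ω, c x * u x * ψ x ≤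
      ∫ x in Ω, (b x * ‖gradient u x‖ * ψ x + fderiv ℝ ψ x (gradient u x)) := by
  have hvanish : ∀ x ∉ tsupport ψ, ψ x = 0 ∧ fderiv ℝ ψ x = 0 := fun x hx =>
    ⟨image_eq_zero_of_notMem_tsupport hx, fderiv_of_notMem_tsupport ℝ hx⟩
  have hint : ∀ f : EuclideanSpace ℝ (Fin N) → ℝ, ContinuousOn f Ω →
      (∀ x ∉ tsupport ψ, f x = 0) → IntegrableOn f Ω := fun f hf h0 =>
    hf.integrableOn_of_eq_zero_off_compact hψc hψΩ hΩ.measurableSet h0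
  have hu1 : ContDiffOn ℝ 1 u Ω := hu.of_le one_le_two
  have hgu := hu1.continuousOn_gradient hΩ
  have hdψ : ContinuousOn (fun x => fderiv ℝ ψ x (gradient u x)) Ω :=
    (hψ.continuousOn_fderiv_of_isOpen hΩ le_rfl).clm_apply hgu
  have hlap := hu.continuousOn_lap hΩ
  calc ∫ x in Ω, c x * u x * ψ x
      ≤ ∫ x in Ω, (-(lap u x) + b x * ‖gradient u x‖) * ψ x :=
        setIntegral_mono_on
          (hint (fun x => c x * u x * ψ x) ((hc.mul hu1.continuousOn).mul hψ.continuousOn)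
            fun x hx => by simp [hvanish x hx])
          (hint (fun x => (-(lap u x) + b x * ‖gradient u x‖) * ψ x)
            ((hlap.neg.add (hb.mul hgu.norm)).mul hψ.continuousOn)
            fun x hx => by simp [hvanish x hx])
          hΩ.measurableSet fun x hx => mul_le_mul_of_nonneg_right (hsuper x hx) (hψ0 x hx)
    _ = ∫ x in Ω, ((b x * ‖gradient u x‖ * ψ x + fderiv ℝ ψ x (gradient u x)) -
          (ψ x * lap u x + fderiv ℝ ψ x (gradient u x))) :=
        setIntegral_congr_fun hΩ.measurableSet fun x _ => by ring
    _ = ∫ x in Ω, (b x * ‖gradient u x‖ * ψ x + fderiv ℝ ψ x (gradient u x)) := by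
        rw [integral_sub
          (hint (fun x => b x * ‖gradient u x‖ * ψ x + fderiv ℝ ψ x (gradient u x))
            (((hb.mul hgu.norm).mul hψ.continuousOn).add hdψ) fun x hx => by simp [hvanish x hx])
          (hint (fun x => ψ x * lap u x + fderiv ℝ ψ x (gradient u x))
            ((hψ.continuousOn.mul hlap).add hdψ) fun x hx => by simp [hvanish x hx]),
          integral_mul_lap_add_fderiv_gradient_eq_zero hΩ hu hψ hψc hψΩ, sub_zero]

end Euclidean

theorem stmt_3_general {N : ℕ} (Ω : Set (EuclideanSpace ℝ (Fin N))) (hΩ : IsOpen Ω)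
    (b c : EuclideanSpace ℝ (Fin N) → ℝ)
    (hb : ContinuousOn b Ω) (hc : ContinuousOn c Ω)
    (u : EuclideanSpace ℝ (Fin N) → ℝ) (hu : ContDiffOn ℝ 2 u Ω)
    (hupos : ∀ x ∈ Ω, 0 < u x)
    (hsuper : ∀ x ∈ Ω, c x * u x ≤ -(lap u x) + b x * ‖gradient u x‖)
    (t : ℝ) (ht : 1 / 2 < t)
    (φ : EuclideanSpace ℝ (Fin N) → ℝ)
    (hφ : ContDiff ℝ (⊤ : ℕ∞) φ) (hφc : HasCompactSupport φ) (hφΩ : tsupport φ ⊆ Ω) :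
    (∫ x in Ω, c x * (φ x) ^ 2) ≤
      2 * t * (∫ x in Ω, ‖gradient φ x‖ ^ 2) +
        t / (2 * (2 * t - 1)) * (∫ x in Ω, (b x) ^ 2 * (φ x) ^ 2) := by
  set ψ := fun x => φ x ^ 2 / u x
  have hφ1 : ContDiff ℝ 1 φ := hφ.of_le (by exact_mod_cast le_top)
  have hu1 : ContDiffOn ℝ 1 u Ω := hu.of_le one_le_two
  have hψ : ContDiffOn ℝ 1 ψ Ω := (hφ1.pow 2).contDiffOn.div hu1 fun x hx => (hupos x hx).ne'
  have hψφ : Function.support ψ ⊆ Function.support φ := fun x hx h0 => hx (by simp [ψ, h0])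
  have hvanish : ∀ x ∉ tsupport φ, φ x = 0 ∧ ψ x = 0 ∧ gradient φ x = 0 ∧ fderiv ℝ ψ x = 0 :=
    fun x hx => ⟨image_eq_zero_of_notMem_tsupport hx,
      by simp [ψ, image_eq_zero_of_notMem_tsupport hx],
      by simp [gradient, fderiv_of_notMem_tsupport ℝ hx],
      fderiv_of_notMem_tsupport ℝ fun h => hx (closure_mono hψφ h)⟩
  have hint : ∀ f : EuclideanSpace ℝ (Fin N) → ℝ, ContinuousOn f Ω →
      (∀ x ∉ tsupport φ, f x = 0) → IntegrableOn f Ω := fun f hf h0 =>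
    hf.integrableOn_of_eq_zero_off_compact hφc hφΩ hΩ.measurableSet h0
  have hgu := hu1.continuousOn_gradient hΩ
  have hI₁ := hint (fun x => b x * ‖gradient u x‖ * ψ x + fderiv ℝ ψ x (gradient u x))
    (((hb.mul hgu.norm).mul hψ.continuousOn).add
      ((hψ.continuousOn_fderiv_of_isOpen hΩ le_rfl).clm_apply hgu))
    fun x hx => by simp [hvanish x hx]
  have hgφ : Continuous (gradient φ) :=
    continuousOn_univ.1 (hφ1.contDiffOn.continuousOn_gradient isOpen_univ)
  have hI₂ := hint (fun x => 2 * t * ‖gradient φ x‖ ^ 2)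
    (continuous_const.mul (hgφ.norm.pow 2)).continuousOn fun x hx => by simp [hvanish x hx]
  have hI₃ := hint (fun x => t / (2 * (2 * t - 1)) * (b x ^ 2 * φ x ^ 2))
    (continuousOn_const.mul ((hb.pow 2).mul (hφ1.continuous.pow 2).continuousOn))
    fun x hx => by simp [hvanish x hx]
  calc ∫ x in Ω, c x * φ x ^ 2 = ∫ x in Ω, c x * u x * ψ x :=
        setIntegral_congr_fun hΩ.measurableSet fun x hx => by
          have hux := hupos x hx
          simp only [ψ]
          field_simp
    _ ≤ ∫ x in Ω, (b x * ‖gradient u x‖ * ψ x + fderiv ℝ ψ x (gradient u x)) :=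
        integral_mul_mul_le_of_supersolution hΩ hb hc hu hsuper hψ (hφc.mono hψφ)
          ((closure_mono hψφ).trans hφΩ) fun x hx => by positivity [hupos x hx]
    _ ≤ ∫ x in Ω, (2 * t * ‖gradient φ x‖ ^ 2 + t / (2 * (2 * t - 1)) * (b x ^ 2 * φ x ^ 2)) :=
        setIntegral_mono_on hI₁ (hI₂.add hI₃) hΩ.measurableSet fun x hx =>
          mul_norm_gradient_add_fderiv_sq_div_le ht (b x) (hφ1.differentiable one_ne_zero x)
            ((hu1.differentiableOn one_ne_zero).differentiableAt (hΩ.mem_nhds hx)) (hupos x hx)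
    _ = _ := by
        rw [integral_add hI₂ hI₃, integral_const_mul, integral_const_mul]

theorem stmt_3 {N : ℕ} (hN : 3 ≤ N) (Ω : Set (EuclideanSpace ℝ (Fin N))) (hΩ : IsOpen Ω)
    (b c : EuclideanSpace ℝ (Fin N) → ℝ)
    (hb : ContinuousOn b Ω) (hc : ContinuousOn c Ω) (hc0 : ∀ x ∈ Ω, 0 ≤ c x)
    (u : EuclideanSpace ℝ (Fin N) → ℝ) (hu : ContDiffOn ℝ 2 u Ω)
    (hupos : ∀ x ∈ Ω, 0 < u x)
    (hsuper : ∀ x ∈ Ω, c x * u x ≤ -(lap u x) + b x * ‖gradient u x‖)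
    (t : ℝ) (ht : 1 / 2 < t)
    (φ : EuclideanSpace ℝ (Fin N) → ℝ)
    (hφ : ContDiff ℝ (⊤ : ℕ∞) φ) (hφc : HasCompactSupport φ) (hφΩ : tsupport φ ⊆ Ω) :
    (∫ x in Ω, c x * (φ x) ^ 2) ≤
      2 * t * (∫ x in Ω, ‖gradient φ x‖ ^ 2) +
        t / (2 * (2 * t - 1)) * (∫ x in Ω, (b x) ^ 2 * (φ x) ^ 2) :=
  stmt_3_general Ω hΩ b c hb hc u hu hupos hsuper t ht φ hφ hφc hφΩ
end

section
/- Let N ≥ 3, R₀ > 0, Ω = {x ∈ ℝ^N : |x| > R₀}, and let b, c : Ω → ℝ be continuous with c(x) − b(x)²/4 > 0 for all sufficiently large |x|. Suppose τ := limsup_{|x|→∞} |x|·|b(x)| is finite. If liminf_{|x|→∞} |x|² c(x) > (N − 2 + τ)²/4, then the equation −Δu + b(x)|∇u| = c(x)u has no positive classical supersolution on Ω. -/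
open MeasureTheory Filter

/-
Fix `τ' > τ` and `M` with `(N - 2 + τ')² < 4M` such that, far out, `‖x‖ |b x| ≤ τ'` and
`M < ‖x‖² c x`. For a radial function `φ x = w (log ‖x‖)` one has `Δφ = (w'' + (N - 2) w') / ‖x‖²`
and `|∇φ| = |w'| / ‖x‖`, so it suffices to find `w > 0` on an interval `(a, r)`, vanishing at its
ends, with `w'' + (N - 2) w' - τ' |w'| + M w = 0`. As `(N - 2 ∓ τ')² < 4M`, the linear equations
with drifts `N - 2 ∓ τ'` oscillate: `w` is a time-reversed damped oscillation of the first up to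
its peak, glued to one of the second after it. If `T` is the largest constant with `T φ ≤ u` on the
annulus `e^a ≤ ‖x‖ ≤ e^r`, the contact point `x₀` is interior, so `∇u = T ∇φ` and `Δu ≥ T Δφ`
there, and the supersolution inequality gives `c u ≤ M u / ‖x₀‖² < c u` at `x₀`.
-/

open Topology Set Real

theorem IsLocalMin.nonneg_of_hasDerivAt_deriv {h h' : ℝ → ℝ} {a d : ℝ} (hmin : IsLocalMin h a)
    (hh : ∀ᶠ t in 𝓝 a, HasDerivAt h (h' t) t) (hh' : HasDerivAt h' d a) : 0 ≤ d := by
  by_contra! hd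
  have h'_sign := eventually_nhdsWithin_sign_eq_of_deriv_neg (hh'.deriv ▸ hd)
    (hmin.hasDerivAt_eq_zero hh.self_of_nhds)
  obtain ⟨ε, hε, hball⟩ := Metric.eventually_nhds_iff_ball.mp ((hmin.and hh).and h'_sign)
  have hsub : Icc a (a + ε / 2) ⊆ Metric.ball a ε := fun t ht => by
    rw [Metric.mem_ball, Real.dist_eq, abs_lt]; constructor <;> linarith [ht.1, ht.2]
  obtain ⟨c, hc, hslope⟩ := exists_hasDerivAt_eq_slope h h' (by linarith : a < a + ε / 2)
    (fun t ht => ((hball t (hsub ht)).1.2).continuousAt.continuousWithinAt)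
    (fun t ht => (hball t (hsub (Ioo_subset_Icc_self ht))).1.2)
  have hc_neg : h' c < 0 := by
    have := (hball c (hsub (Ioo_subset_Icc_self hc))).2
    rwa [sign_neg (sub_neg.mpr hc.1), sign_eq_neg_one_iff] at this
  have hmin_end := (hball (a + ε / 2) (hsub (right_mem_Icc.mpr (by linarith)))).1.1
  rw [hslope, div_neg_iff] at hc_neg
  rcases hc_neg with ⟨-, h2⟩ | ⟨h1, -⟩ <;> linarith

theorem hasDerivAt_ite_le {f g f' g' : ℝ → ℝ} {m : ℝ} (hf : ∀ s, HasDerivAt f (f' s) s)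
    (hg : ∀ s, HasDerivAt g (g' s) s) (h₀ : f m = g m) (h₁ : f' m = g' m) (s : ℝ) :
    HasDerivAt (fun s => if s ≤ m then f s else g s) (if s ≤ m then f' s else g' s) s := by
  rcases lt_trichotomy s m with hs | rfl | hs
  · rw [if_pos hs.le]
    refine (hf s).congr_of_eventuallyEq ?_
    filter_upwards [eventually_lt_nhds hs] with t ht using if_pos ht.le
  · have hle : HasDerivWithinAt (fun t => if t ≤ s then f t else g t) (f' s) (Iic s) s :=
      (hf s).hasDerivWithinAt.congr (fun t ht => if_pos ht) (if_pos le_rfl)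
    have hge : HasDerivWithinAt (fun t => if t ≤ s then f t else g t) (f' s) (Ici s) s := by
      refine h₁ ▸ (hg s).hasDerivWithinAt.congr (fun t ht => ?_) (by simp [h₀])
      rcases (mem_Ici.mp ht).lt_or_eq with ht | rfl
      · exact if_neg ht.not_ge
      · simp [h₀]
    simpa using hle.union hge
  · rw [if_neg hs.not_ge]
    refine (hg s).congr_of_eventuallyEq ?_
    filter_upwards [eventually_gt_nhds hs] with t ht using if_neg ht.not_ge

theorem hasDerivAt_exp_mul_sin (μ β s : ℝ) :
    HasDerivAt (fun s => exp (μ * s) * sin (β * s))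
      (exp (μ * s) * (μ * sin (β * s) + β * cos (β * s))) s := by
  have hexp := ((hasDerivAt_id s).const_mul μ).exp
  have hsin := ((hasDerivAt_id s).const_mul β).sin
  simp only [id, mul_one] at hexp hsin
  exact (hexp.mul hsin).congr_deriv (by ring)

theorem hasDerivAt_exp_mul_cos_sub_sin {β : ℝ} (hβ : β ≠ 0) (μ s : ℝ) :
    HasDerivAt (fun s => exp (μ * s) * (cos (β * s) - μ / β * sin (β * s)))
      (-((μ ^ 2 + β ^ 2) / β) * (exp (μ * s) * sin (β * s))) s := by
  have hexp := ((hasDerivAt_id s).const_mul μ).exp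
  have hcos := ((hasDerivAt_id s).const_mul β).cos
  have hsin := (((hasDerivAt_id s).const_mul β).sin).const_mul (μ / β)
  simp only [id, mul_one] at hexp hcos hsin
  refine (hexp.mul (hcos.fun_sub hsin)).congr_deriv ?_
  field_simp
  ring

theorem exists_linear_ode_solution_decreasing_to_zero (k M : ℝ) (hkM : k ^ 2 < 4 * M) :
    ∃ (z z' z'' : ℝ → ℝ) (d : ℝ), 0 < d ∧ (∀ s, HasDerivAt z (z' s) s) ∧
      (∀ s, HasDerivAt z' (z'' s) s) ∧ (∀ s, z'' s + k * z' s + M * z s = 0) ∧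
      z 0 = 1 ∧ z' 0 = 0 ∧ z d = 0 ∧ (∀ s ∈ Ico 0 d, 0 < z s) ∧ ∀ s ∈ Icc 0 d, z' s ≤ 0 := by
  set μ := -k / 2
  set β := √(M - μ ^ 2)
  have hβ : 0 < β := Real.sqrt_pos.mpr (by simp only [μ]; nlinarith)
  have hM : M = μ ^ 2 + β ^ 2 := by rw [Real.sq_sqrt (by simp only [μ]; nlinarith)]; ring
  set z := fun s => exp (μ * s) * (cos (β * s) - μ / β * sin (β * s))
  set z' := fun s => -(M / β) * (exp (μ * s) * sin (β * s))
  set z'' := fun s => -(M / β) * (exp (μ * s) * (μ * sin (β * s) + β * cos (β * s)))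
  have hz (s : ℝ) : HasDerivAt z (z' s) s := by
    simpa only [z', hM] using hasDerivAt_exp_mul_cos_sub_sin hβ.ne' μ s
  have hz' (s : ℝ) : HasDerivAt z' (z'' s) s := (hasDerivAt_exp_mul_sin μ β s).const_mul _
  have hode (s : ℝ) : z'' s + k * z' s + M * z s = 0 := by
    simp only [z, z', z'', μ]
    field_simp
    ring
  have hz'_neg : ∀ s ∈ Ioo 0 (π / β), z' s < 0 := fun s hs => by
    have : 0 < sin (β * s) := sin_pos_of_pos_of_lt_pi (by nlinarith [hs.1])
      (by linarith [(lt_div_iff₀ hβ).mp hs.2])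
    have : 0 < M / β * (exp (μ * s) * sin (β * s)) := by rw [hM]; positivity
    simp only [z']
    linarith
  have hanti : StrictAntiOn z (Icc 0 (π / β)) :=
    strictAntiOn_of_deriv_neg (convex_Icc _ _) (fun s _ => (hz s).continuousAt.continuousWithinAt)
      (fun s hs => by rw [interior_Icc] at hs; rw [(hz s).deriv]; exact hz'_neg s hs)
  have hz0 : z 0 = 1 := by simp [z]
  have hzπ : z (π / β) < 0 := by
    simp only [z]
    rw [mul_div_cancel₀ _ hβ.ne', cos_pi, sin_pi]
    nlinarith [exp_pos (μ * (π / β))]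
  obtain ⟨d, hd, hzd⟩ := intermediate_value_Icc' (by positivity : 0 ≤ π / β)
    (fun s _ => (hz s).continuousAt.continuousWithinAt) ⟨hzπ.le, hz0.ge.trans' zero_le_one⟩
  have hd0 : 0 < d := hd.1.lt_of_ne (by rintro rfl; simp [hz0] at hzd)
  have hdπ : d < π / β := hd.2.lt_of_ne (by rintro rfl; linarith)
  refine ⟨z, z', z'', d, hd0, hz, hz', hode, hz0, by simp [z'], hzd, fun s hs => ?_, fun s hs => ?_⟩
  · exact hzd ▸ hanti ⟨hs.1, hs.2.le.trans hd.2⟩ hd hs.2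
  · rcases hs.1.eq_or_lt with rfl | hs0
    · simp [z']
    · exact (hz'_neg s ⟨hs0, hs.2.trans_lt hdπ⟩).le

theorem exists_pos_solution_abs_deriv_ode (p t M a : ℝ) (h₁ : (p - t) ^ 2 < 4 * M)
    (h₂ : (p + t) ^ 2 < 4 * M) :
    ∃ (w w' w'' : ℝ → ℝ) (b : ℝ), a < b ∧ (∀ s, HasDerivAt w (w' s) s) ∧
      (∀ s, HasDerivAt w' (w'' s) s) ∧ w a = 0 ∧ w b = 0 ∧ (∀ s ∈ Ioo a b, 0 < w s) ∧
      ∀ s ∈ Icc a b, w'' s + p * w' s - t * |w' s| + M * w s = 0 := by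
  obtain ⟨z₁, z₁', z₁'', d₁, hd₁, hz₁, hz₁', hode₁, hz₁0, hz₁'0, hz₁d, hz₁pos, hz₁'neg⟩ :=
    exists_linear_ode_solution_decreasing_to_zero (-(p - t)) M (by rwa [neg_sq])
  obtain ⟨z₂, z₂', z₂'', d₂, hd₂, hz₂, hz₂', hode₂, hz₂0, hz₂'0, hz₂d, hz₂pos, hz₂'neg⟩ :=
    exists_linear_ode_solution_decreasing_to_zero (p + t) M h₂
  set m := a + d₁
  -- the rising branch is `z₁` run backwards from its first zero; it meets `z₂` at the peak `m`
  -- with value `1`, slope `0` and (by the two equations) second derivative `-M`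
  refine ⟨fun s => if s ≤ m then z₁ (m - s) else z₂ (s - m),
    fun s => if s ≤ m then -z₁' (m - s) else z₂' (s - m),
    fun s => if s ≤ m then z₁'' (m - s) else z₂'' (s - m), m + d₂, by linarith,
    hasDerivAt_ite_le (fun s => (hz₁ _).comp_const_sub m s) (fun s => (hz₂ _).comp_sub_const s m)
      (by simp [hz₁0, hz₂0]) (by simp [hz₁'0, hz₂'0]),
    hasDerivAt_ite_le (fun s => by simpa using ((hz₁' _).comp_const_sub m s).fun_neg)
      (fun s => (hz₂' _).comp_sub_const s m) (by simp [hz₁'0, hz₂'0]) ?_, ?_, ?_,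
      fun s hs => ?_, fun s hs => ?_⟩
  · have e₁ := hode₁ 0
    have e₂ := hode₂ 0
    simp only [sub_self, hz₁0, hz₁'0, hz₂0, hz₂'0] at e₁ e₂ ⊢
    linarith
  · simp [show a ≤ m by linarith, m, hz₁d]
  · simp [hd₂, hz₂d]
  · dsimp only
    split_ifs with hsm
    · exact hz₁pos _ ⟨by linarith, by linarith [hs.1]⟩
    · exact hz₂pos _ ⟨by linarith, by linarith [hs.2]⟩
  · dsimp only
    split_ifs with hsm
    · have := hz₁'neg (m - s) ⟨by linarith, by linarith [hs.1]⟩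
      rw [abs_of_nonneg (by linarith)]
      linarith [hode₁ (m - s)]
    · have := hz₂'neg (s - m) ⟨by linarith, by linarith [hs.2]⟩
      rw [abs_of_nonpos this]
      linarith [hode₂ (s - m)]

theorem exists_eventually_le_and_lt {X : Type*} {F : Filter X} [F.NeBot] {f g : X → ℝ}
    (hf : ∀ x, 0 ≤ f x) {p τ : ℝ} (hτ : limsup (fun x => (f x : EReal)) F = τ)
    (hg : (((p + τ) ^ 2 / 4 : ℝ) : EReal) < liminf (fun x => (g x : EReal)) F) :
    ∃ τ' M : ℝ, 0 ≤ τ' ∧ (p + τ') ^ 2 < 4 * M ∧ ∀ᶠ x in F, f x ≤ τ' ∧ M < g x := by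
  obtain ⟨M, hM, hMg⟩ := EReal.lt_iff_exists_real_btwn.mp hg
  have hnear : ∀ᶠ t in 𝓝 τ, (p + t) ^ 2 / 4 < M :=
    (by fun_prop : Continuous fun t : ℝ => (p + t) ^ 2 / 4).continuousAt.eventually_lt
      continuousAt_const (EReal.coe_lt_coe_iff.mp hM)
  obtain ⟨τ', hτ'M, hττ'⟩ :=
    ((hnear.filter_mono nhdsWithin_le_nhds).and (self_mem_nhdsWithin (s := Ioi τ))).exists
  have hev : ∀ᶠ x in F, f x ≤ τ' ∧ M < g x := by
    filter_upwards [eventually_lt_of_limsup_lt (hτ ▸ EReal.coe_lt_coe_iff.mpr hττ'),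
      eventually_lt_of_lt_liminf hMg] with x hfx hgx
    exact ⟨(EReal.coe_lt_coe_iff.mp hfx).le, EReal.coe_lt_coe_iff.mp hgx⟩
  obtain ⟨x, hx, -⟩ := hev.exists
  exact ⟨τ', M, (hf x).trans hx, by linarith, hev⟩

theorem IsCompact.exists_largest_multiple_le {X : Type*} [TopologicalSpace X] {K : Set X}
    (hK : IsCompact K) {u φ : X → ℝ} (hu : ContinuousOn u K) (hφ : ContinuousOn φ K)
    (hu_pos : ∀ x ∈ K, 0 < u x) {x₁ : X} (hx₁ : x₁ ∈ K) (hφx₁ : 0 < φ x₁) :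
    ∃ T > 0, ∃ x₀ ∈ K, 0 < φ x₀ ∧ u x₀ = T * φ x₀ ∧ ∀ x ∈ K, T * φ x ≤ u x := by
  obtain ⟨x₀, hx₀, hmax⟩ := hK.exists_isMaxOn ⟨x₁, hx₁⟩
    (hφ.div hu fun x hx => (hu_pos x hx).ne')
  have hu₀ := hu_pos x₀ hx₀
  have hφx₀ : 0 < φ x₀ := by
    have := (div_pos hφx₁ (hu_pos x₁ hx₁)).trans_le (hmax hx₁)
    exact (div_pos_iff_of_pos_right hu₀).mp this
  refine ⟨u x₀ / φ x₀, by positivity, x₀, hx₀, hφx₀, by field_simp, fun x hx => ?_⟩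
  have : φ x / u x ≤ φ x₀ / u x₀ := hmax hx
  rw [div_le_div_iff₀ (hu_pos x hx) hu₀] at this
  rw [div_mul_eq_mul_div, div_le_iff₀ hφx₀]
  linarith

theorem exists_isLocalMin_sub_radial {E : Type*} [NormedAddCommGroup E] [NormedSpace ℝ E]
    [ProperSpace E] [Nontrivial E] {u : E → ℝ} {w : ℝ → ℝ} {a b : ℝ} (hab : a < b)
    (hw : Continuous w) (hwa : w a = 0) (hwb : w b = 0) (hw_pos : ∀ s ∈ Ioo a b, 0 < w s)
    (hu : ContinuousOn u {x | ‖x‖ ∈ Icc (exp a) (exp b)})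
    (hu_pos : ∀ x, ‖x‖ ∈ Icc (exp a) (exp b) → 0 < u x) :
    ∃ T > 0, ∃ x₀ : E, ‖x₀‖ ∈ Icc (exp a) (exp b) ∧ log ‖x₀‖ ∈ Ioo a b ∧
      u x₀ = T * w (log ‖x₀‖) ∧
      IsLocalMin (fun y => u y - T * w (log ‖y‖)) x₀ := by
  set K := {x : E | ‖x‖ ∈ Icc (exp a) (exp b)}
  have hK : IsCompact K := Metric.isCompact_of_isClosed_isBounded
    (isClosed_Icc.preimage continuous_norm)
    (Metric.isBounded_closedBall.subset fun x hx => mem_closedBall_zero_iff.mpr hx.2)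
  have hnorm_pos : ∀ x ∈ K, 0 < ‖x‖ := fun x hx => (exp_pos a).trans_le hx.1
  have hlog : ∀ x ∈ K, log ‖x‖ ∈ Icc a b := fun x hx =>
    ⟨(le_log_iff_exp_le (hnorm_pos x hx)).mpr hx.1, (log_le_iff_le_exp (hnorm_pos x hx)).mpr hx.2⟩
  have hφ : ContinuousOn (fun x => w (log ‖x‖)) K :=
    hw.comp_continuousOn (continuous_norm.continuousOn.log fun x hx => (hnorm_pos x hx).ne')
  obtain ⟨x₁, hx₁⟩ := exists_norm_eq E (exp_pos ((a + b) / 2)).le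
  have hx₁K : x₁ ∈ K := by
    simp only [K, mem_ofPred_eq, hx₁, mem_Icc, exp_le_exp]; constructor <;> linarith
  obtain ⟨T, hT, x₀, hx₀K, hφx₀, hux₀, hle⟩ := hK.exists_largest_multiple_le hu hφ hu_pos hx₁K
    (by rw [hx₁, log_exp]; exact hw_pos _ ⟨by linarith, by linarith⟩)
  obtain ⟨ha, hb⟩ := hlog x₀ hx₀K
  have hs₀ : log ‖x₀‖ ∈ Ioo a b := by
    refine ⟨ha.lt_of_ne fun h => ?_, hb.lt_of_ne fun h => ?_⟩
    · simp [← h, hwa] at hφx₀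
    · simp [h, hwb] at hφx₀
  have hK_nhds : K ∈ 𝓝 x₀ := by
    have hx₀ := hnorm_pos x₀ hx₀K
    refine mem_of_superset ((continuous_norm.tendsto x₀).eventually (Ioo_mem_nhds ?_ ?_))
      fun y hy => Ioo_subset_Icc_self hy
    · exact (lt_log_iff_exp_lt hx₀).mp hs₀.1
    · exact (log_lt_iff_lt_exp hx₀).mp hs₀.2
  refine ⟨T, hT, x₀, hx₀K, hs₀, hux₀, IsMinOn.isLocalMin (fun y hy => ?_) hK_nhds⟩
  simp only [mem_ofPred_eq, hux₀, sub_self, sub_nonneg]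
  exact hle y hy

section

variable {E : Type*} [NormedAddCommGroup E] [NormedSpace ℝ E]

theorem le_fderiv_fderiv_apply_of_isLocalMin_sub {u ψ : E → ℝ} {ψ' : E → E →L[ℝ] ℝ} {x e : E}
    {d : ℝ} (hu : ContDiffAt ℝ 2 u x) (hψ : ∀ᶠ y in 𝓝 x, HasFDerivAt ψ (ψ' y) y)
    (hψ' : HasDerivAt (fun t : ℝ => ψ' (x + t • e) e) d 0)
    (hmin : IsLocalMin (fun y => u y - ψ y) x) :
    d ≤ fderiv ℝ (fun y => fderiv ℝ u y e) x e := by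
  have hline (t : ℝ) : HasDerivAt (fun t : ℝ => x + t • e) e t := by
    simpa using ((hasDerivAt_id t).smul_const e).const_add x
  have hline_tendsto : Tendsto (fun t : ℝ => x + t • e) (𝓝 0) (𝓝 x) := by
    simpa using (hline 0).continuousAt.tendsto
  have hu_diff : ∀ᶠ y in 𝓝 x, DifferentiableAt ℝ u y :=
    (hu.eventually (by simp)).mono fun y hy => hy.differentiableAt (by norm_num)
  have hu'_diff : DifferentiableAt ℝ (fun y => fderiv ℝ u y e) x :=
    ((hu.fderiv_right (m := 1) (by norm_num)).differentiableAt (by norm_num)).clm_apply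
      (differentiableAt_const e)
  have hmin_line : IsLocalMin (fun t : ℝ => u (x + t • e) - ψ (x + t • e)) 0 :=
    IsLocalMin.comp_continuous (f := fun y => u y - ψ y) (g := fun t : ℝ => x + t • e)
      (by simpa using hmin) (hline 0).continuousAt
  have hderiv : ∀ᶠ t in 𝓝 (0 : ℝ), HasDerivAt (fun t : ℝ => u (x + t • e) - ψ (x + t • e))
      (fderiv ℝ u (x + t • e) e - ψ' (x + t • e) e) t := by
    filter_upwards [hline_tendsto.eventually hu_diff, hline_tendsto.eventually hψ] with t hut hψt
    exact (hut.hasFDerivAt.comp_hasDerivAt t (hline t)).sub (hψt.comp_hasDerivAt t (hline t))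
  have hderiv2 : HasDerivAt (fun t : ℝ => fderiv ℝ u (x + t • e) e - ψ' (x + t • e) e)
      (fderiv ℝ (fun y => fderiv ℝ u y e) x e - d) 0 := by
    refine HasDerivAt.sub ?_ hψ'
    have hu'_at : HasFDerivAt (fun y => fderiv ℝ u y e) (fderiv ℝ (fun y => fderiv ℝ u y e) x)
        (x + (0 : ℝ) • e) := by simpa using hu'_diff.hasFDerivAt
    exact hu'_at.comp_hasDerivAt (0 : ℝ) (hline 0)
  linarith [hmin_line.nonneg_of_hasDerivAt_deriv hderiv hderiv2]

end

section

variable {E : Type*} [NormedAddCommGroup E] [InnerProductSpace ℝ E]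

theorem hasFDerivAt_log_norm {x : E} (hx : x ≠ 0) :
    HasFDerivAt (fun y => log ‖y‖) ((‖x‖ ^ 2)⁻¹ • innerSL ℝ x) x := by
  have h := ((hasStrictFDerivAt_norm_sq x).hasFDerivAt.log (by positivity)).const_mul (1 / 2 : ℝ)
  have hfun : (fun y : E => log ‖y‖) = fun y => 1 / 2 * log (‖y‖ ^ 2) := by
    ext y; rw [Real.log_pow]; push_cast; ring
  rw [hfun]
  refine h.congr_fderiv ?_
  ext v
  simp only [one_div, smul_apply, coe_innerSL_apply, nsmul_eq_mul, Nat.cast_ofNat, smul_eq_mul]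
  ring

theorem hasFDerivAt_comp_log_norm {v : ℝ → ℝ} {v' : ℝ} {x : E} (hx : x ≠ 0)
    (hv : HasDerivAt v v' (log ‖x‖)) :
    HasFDerivAt (fun y => v (log ‖y‖)) (v' • (‖x‖ ^ 2)⁻¹ • innerSL ℝ x) x :=
  hv.comp_hasFDerivAt x (hasFDerivAt_log_norm hx)

theorem hasDerivAt_radial_fderiv_along_line {v' : ℝ → ℝ} {v'' : ℝ} {x : E} (hx : x ≠ 0) (e : E)
    (hv' : HasDerivAt v' v'' (log ‖x‖)) :
    HasDerivAt (fun t : ℝ => (v' (log ‖x + t • e‖) • (‖x + t • e‖ ^ 2)⁻¹ • innerSL ℝ (x + t • e)) e)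
      (v'' * (inner ℝ x e / ‖x‖ ^ 2) ^ 2 +
        v' (log ‖x‖) * (‖e‖ ^ 2 / ‖x‖ ^ 2 - 2 * inner ℝ x e ^ 2 / ‖x‖ ^ 4)) 0 := by
  have hline : HasDerivAt (fun t : ℝ => x + t • e) e 0 := by
    simpa using ((hasDerivAt_id (0 : ℝ)).smul_const e).const_add x
  have hlog : HasDerivAt (fun t : ℝ => log ‖x + t • e‖) ((‖x‖ ^ 2)⁻¹ * inner ℝ x e) 0 := by
    have hx' : HasFDerivAt (fun y => log ‖y‖) ((‖x‖ ^ 2)⁻¹ • innerSL ℝ x) (x + (0 : ℝ) • e) := by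
      simpa using hasFDerivAt_log_norm hx
    refine (hx'.comp_hasDerivAt (0 : ℝ) hline).congr_deriv ?_
    simp
  have hv'_at : HasDerivAt v' v'' (log ‖x + (0 : ℝ) • e‖) := by simpa using hv'
  have hsq : HasDerivAt (fun t : ℝ => ‖x + t • e‖ ^ 2) (2 * inner ℝ x e) 0 := by
    simpa using hline.norm_sq
  have hinner : HasDerivAt (fun t : ℝ => inner ℝ (x + t • e) e) (‖e‖ ^ 2) 0 := by
    simpa [real_inner_self_eq_norm_sq] using hline.inner ℝ (hasDerivAt_const (0 : ℝ) e)
  have hx2 : ‖x + (0 : ℝ) • e‖ ^ 2 ≠ 0 := by simpa using hx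
  have h := (hv'_at.comp (0 : ℝ) hlog).mul ((hsq.inv hx2).mul hinner)
  simp only [FunLike.coe_smul, Pi.smul_apply, innerSL_apply_apply, smul_eq_mul]
  refine h.congr_deriv ?_
  have : ‖x‖ ≠ 0 := norm_ne_zero_iff.mpr hx
  simp only [Pi.mul_apply, Pi.inv_apply, zero_smul, add_zero, Function.comp_apply]
  field_simp
  ring

theorem norm_gradient_eq_of_isLocalMin_sub_radial [CompleteSpace E] {u : E → ℝ} {v : ℝ → ℝ}
    {v' : ℝ} {x : E} (hx : x ≠ 0) (hu : DifferentiableAt ℝ u x) (hv : HasDerivAt v v' (log ‖x‖))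
    (hmin : IsLocalMin (fun y => u y - v (log ‖y‖)) x) :
    ‖gradient u x‖ = |v'| / ‖x‖ := by
  have hψ := hasFDerivAt_comp_log_norm hx hv
  have hfderiv : fderiv ℝ u x = v' • (‖x‖ ^ 2)⁻¹ • innerSL ℝ x :=
    sub_eq_zero.mp (hmin.hasFDerivAt_eq_zero (hu.hasFDerivAt.sub hψ))
  have hx0 : 0 < ‖x‖ := norm_pos_iff.mpr hx
  rw [gradient, LinearIsometryEquiv.norm_map, hfderiv, norm_smul, norm_smul, innerSL_apply_norm,
    Real.norm_eq_abs, Real.norm_eq_abs, abs_of_pos (by positivity : (0:ℝ) < (‖x‖ ^ 2)⁻¹)]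
  field_simp

end

theorem lap_ge_of_isLocalMin_sub_radial {N : ℕ} {u : EuclideanSpace ℝ (Fin N) → ℝ}
    {v v' : ℝ → ℝ} {v'' : ℝ} {x : EuclideanSpace ℝ (Fin N)} (hx : x ≠ 0)
    (hu : ContDiffAt ℝ 2 u x) (hv : ∀ s, HasDerivAt v (v' s) s)
    (hv' : HasDerivAt v' v'' (log ‖x‖)) (hmin : IsLocalMin (fun y => u y - v (log ‖y‖)) x) :
    (v'' + (N - 2) * v' (log ‖x‖)) / ‖x‖ ^ 2 ≤ lap u x := by
  have hψ : ∀ᶠ y in 𝓝 x, HasFDerivAt (fun y => v (log ‖y‖))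
      (v' (log ‖y‖) • (‖y‖ ^ 2)⁻¹ • innerSL ℝ y) y := by
    filter_upwards [isOpen_ne.mem_nhds hx] with y hy using hasFDerivAt_comp_log_norm hy (hv _)
  have hdir (i : Fin N) := le_fderiv_fderiv_apply_of_isLocalMin_sub hu hψ
    (hasDerivAt_radial_fderiv_along_line hx (EuclideanSpace.single i 1) hv') hmin
  have hsq : ∑ i, x i ^ 2 = ‖x‖ ^ 2 := by
    simp [EuclideanSpace.norm_sq_eq]
  have hx0 : ‖x‖ ≠ 0 := norm_ne_zero_iff.mpr hx
  calc (v'' + (N - 2) * v' (log ‖x‖)) / ‖x‖ ^ 2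
      = ∑ i : Fin N, (v'' * (x i / ‖x‖ ^ 2) ^ 2 +
          v' (log ‖x‖) * (1 / ‖x‖ ^ 2 - 2 * x i ^ 2 / ‖x‖ ^ 4)) := by
        simp only [Finset.sum_add_distrib, ← Finset.mul_sum, Finset.sum_sub_distrib, div_pow,
          ← Finset.sum_div, hsq, Finset.sum_const, Finset.card_univ, Fintype.card_fin,
          nsmul_eq_mul, mul_one]
        field_simp
    _ ≤ lap u x := Finset.sum_le_sum fun i _ => by
        simpa [EuclideanSpace.inner_single_right] using hdir i

theorem neg_lap_add_mul_norm_gradient_lt_of_isLocalMin_sub_radial {N : ℕ}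
    {u b c : EuclideanSpace ℝ (Fin N) → ℝ} {w w' w'' : ℝ → ℝ} {x : EuclideanSpace ℝ (Fin N)}
    {T τ M : ℝ} (hx : x ≠ 0) (hu : ContDiffAt ℝ 2 u x) (hw : ∀ s, HasDerivAt w (w' s) s)
    (hw' : ∀ s, HasDerivAt w' (w'' s) s) (hT : 0 < T)
    (hmin : IsLocalMin (fun y => u y - T * w (log ‖y‖)) x) (hux : u x = T * w (log ‖x‖))
    (hux_pos : 0 < u x)
    (hode : w'' (log ‖x‖) + (N - 2) * w' (log ‖x‖) - τ * |w' (log ‖x‖)| + M * w (log ‖x‖) = 0)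
    (hb : ‖x‖ * |b x| ≤ τ) (hc : M < ‖x‖ ^ 2 * c x) :
    -lap u x + b x * ‖gradient u x‖ < c x * u x := by
  have hr : 0 < ‖x‖ := norm_pos_iff.mpr hx
  have hlap := lap_ge_of_isLocalMin_sub_radial hx hu (fun s => (hw s).const_mul T)
    ((hw' _).const_mul T) hmin
  rw [div_le_iff₀ (by positivity)] at hlap
  have hgrad := norm_gradient_eq_of_isLocalMin_sub_radial hx (hu.differentiableAt (by norm_num))
    ((hw _).const_mul T) hmin
  rw [abs_mul, abs_of_pos hT] at hgrad
  have hdrift : ‖x‖ ^ 2 * (b x * ‖gradient u x‖) ≤ τ * (T * |w' (log ‖x‖)|) := by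
    calc ‖x‖ ^ 2 * (b x * ‖gradient u x‖) = ‖x‖ * b x * (T * |w' (log ‖x‖)|) := by
          rw [hgrad]; field_simp
      _ ≤ ‖x‖ * |b x| * (T * |w' (log ‖x‖)|) := by gcongr; exact le_abs_self _
      _ ≤ τ * (T * |w' (log ‖x‖)|) := by gcongr
  have hscaled : ‖x‖ ^ 2 * (-lap u x + b x * ‖gradient u x‖) ≤ M * u x := by
    linear_combination hlap + hdrift - T * hode - M * hux
  have hcu : M * u x < ‖x‖ ^ 2 * (c x * u x) := by
    rw [← mul_assoc]; exact mul_lt_mul_of_pos_right hc hux_pos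
  exact lt_of_mul_lt_mul_left (hscaled.trans_lt hcu) (by positivity)

theorem stmt_9_general {N : ℕ} (hN : 3 ≤ N) (R₀ : ℝ)
    (b c : EuclideanSpace ℝ (Fin N) → ℝ)
    (τ : ℝ)
    (hτ : Filter.limsup
        (fun x : EuclideanSpace ℝ (Fin N) => ((‖x‖ * |b x| : ℝ) : EReal))
        (Filter.comap (fun x : EuclideanSpace ℝ (Fin N) => ‖x‖) Filter.atTop) = (τ : EReal))
    (hmain : ((((N : ℝ) - 2 + τ) ^ 2 / 4 : ℝ) : EReal) <
      Filter.liminf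
        (fun x : EuclideanSpace ℝ (Fin N) => ((‖x‖ ^ 2 * c x : ℝ) : EReal))
        (Filter.comap (fun x : EuclideanSpace ℝ (Fin N) => ‖x‖) Filter.atTop)) :
    ¬ ∃ u : EuclideanSpace ℝ (Fin N) → ℝ,
        ContDiffOn ℝ 2 u {x | R₀ < ‖x‖} ∧ (∀ x, R₀ < ‖x‖ → 0 < u x) ∧
          ∀ x, R₀ < ‖x‖ → c x * u x ≤ -(lap u x) + b x * ‖gradient u x‖ := by
  rintro ⟨u, hu, hu_pos, hsuper⟩
  have : NeZero N := ⟨by omega⟩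
  have : (comap (fun x : EuclideanSpace ℝ (Fin N) => ‖x‖) atTop).NeBot := by
    rw [comap_norm_atTop]; infer_instance
  obtain ⟨τ', M, hτ', hM, hev⟩ := exists_eventually_le_and_lt (fun x => by positivity) hτ hmain
  obtain ⟨R₁, -, hR₁⟩ := (atTop_basis.comap _).eventually_iff.mp hev
  have hN2 : (1 : ℝ) ≤ N - 2 := by
    have : (3 : ℝ) ≤ N := by exact_mod_cast hN
    linarith
  obtain ⟨w, w', w'', r, har, hw, hw', hwa, hwr, hw_pos, hode⟩ :=
    exists_pos_solution_abs_deriv_ode (N - 2) τ' M (max R₀ R₁) (by nlinarith) hM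
  have hfar : ∀ x : EuclideanSpace ℝ (Fin N), ‖x‖ ∈ Icc (exp (max R₀ R₁)) (exp r) →
      R₀ < ‖x‖ ∧ R₁ ≤ ‖x‖ := fun x hx => by
    have := add_one_le_exp (max R₀ R₁)
    constructor <;> linarith [le_max_left R₀ R₁, le_max_right R₀ R₁, hx.1]
  obtain ⟨T, hT, x₀, hx₀, hs₀, hux₀, hmin⟩ := exists_isLocalMin_sub_radial har
    (continuous_iff_continuousAt.mpr fun s => (hw s).continuousAt) hwa hwr hw_pos
    (hu.continuousOn.mono fun x hx => (hfar x hx).1) fun x hx => hu_pos x (hfar x hx).1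
  obtain ⟨hR₀x₀, hR₁x₀⟩ := hfar x₀ hx₀
  obtain ⟨hb₀, hc₀⟩ := hR₁ hR₁x₀
  refine (hsuper x₀ hR₀x₀).not_gt (neg_lap_add_mul_norm_gradient_lt_of_isLocalMin_sub_radial
    (norm_pos_iff.mp ((exp_pos _).trans_le hx₀.1))
    (hu.contDiffAt ((isOpen_lt continuous_const continuous_norm).mem_nhds hR₀x₀)) hw hw' hT hmin
    hux₀ (hu_pos x₀ hR₀x₀) (hode _ (Ioo_subset_Icc_self hs₀)) hb₀ hc₀)

theorem stmt_9 {N : ℕ} (hN : 3 ≤ N) (R₀ : ℝ) (hR₀ : 0 < R₀)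
    (b c : EuclideanSpace ℝ (Fin N) → ℝ)
    (hb : ContinuousOn b {x | R₀ < ‖x‖}) (hc : ContinuousOn c {x | R₀ < ‖x‖})
    (hpos : ∃ R₂ : ℝ, ∀ x : EuclideanSpace ℝ (Fin N), R₂ < ‖x‖ → 0 < c x - (b x) ^ 2 / 4)
    (τ : ℝ)
    (hτ : Filter.limsup
        (fun x : EuclideanSpace ℝ (Fin N) => ((‖x‖ * |b x| : ℝ) : EReal))
        (Filter.comap (fun x : EuclideanSpace ℝ (Fin N) => ‖x‖) Filter.atTop) = (τ : EReal))
    (hmain : ((((N : ℝ) - 2 + τ) ^ 2 / 4 : ℝ) : EReal) <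
      Filter.liminf
        (fun x : EuclideanSpace ℝ (Fin N) => ((‖x‖ ^ 2 * c x : ℝ) : EReal))
        (Filter.comap (fun x : EuclideanSpace ℝ (Fin N) => ‖x‖) Filter.atTop)) :
    ¬ ∃ u : EuclideanSpace ℝ (Fin N) → ℝ,
        ContDiffOn ℝ 2 u {x | R₀ < ‖x‖} ∧ (∀ x, R₀ < ‖x‖ → 0 < u x) ∧
          ∀ x, R₀ < ‖x‖ → c x * u x ≤ -(lap u x) + b x * ‖gradient u x‖ :=
  stmt_9_general hN R₀ b c τ hτ hmain
end

section
/- Let N ≥ 3, R₀ > 0, Ω = {x ∈ ℝ^N : |x| > R₀}, and let c : Ω → ℝ be continuous. If liminf_{|x|→∞} |x|² c(x) > (N−2)²/4, then the inequality −Δu ≥ c(x)u has no positive classical supersolution on Ω, i.e., there is no u ∈ C²(Ω) with u > 0 and −Δu(x) ≥ c(x)u(x) for all x ∈ Ω. -/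
/-!
Suppose `u > 0` and `-Δu ≥ c u`, where `|x|² c(x) > μ := (N-2)²/4 + β²` for `|x| ≥ R`. The
radial function `w(x) = (|x|/R)^(-(N-2)/2) sin (β log (|x|/R))` solves `-Δw = μ |x|⁻² w`: in the
variable `t = log |x|` this is the constant-coefficient equation `g'' + (N-2) g' + μ g = 0`.
It is positive on the annulus `R < |x| < R e^(π/β)` and vanishes on its boundary. Scaling `w` until
it touches `u` from below at some `x₀` inside the annulus, `u - t w` has a local minimum at `x₀`,
so `Δu(x₀) ≥ t Δw(x₀) = -μ |x₀|⁻² u(x₀)`, which contradicts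
`-Δu(x₀) ≥ c(x₀) u(x₀) > μ |x₀|⁻² u(x₀)`.
-/

open MeasureTheory Filter

open Topology Real
open scoped RealInnerProductSpace

theorem IsCompact.exists_isLocalMin_sub_mul {X : Type*} [TopologicalSpace X] {K A : Set X}
    (hK : IsCompact K) (hA : IsOpen A) (hAK : A ⊆ K) {u w : X → ℝ} (hu : ContinuousOn u K)
    (hu₀ : ∀ x ∈ K, 0 < u x) (hw : ContinuousOn w K) (hwA : ∀ x ∈ K \ A, w x ≤ 0) {p : X}
    (hp : p ∈ K) (hwp : 0 < w p) :
    ∃ x ∈ A, ∃ t : ℝ, u x = t * w x ∧ IsLocalMin (fun y => u y - t * w y) x := by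
  obtain ⟨x, hxK, hmax⟩ := hK.exists_isMaxOn ⟨p, hp⟩ (hw.div hu fun y hy => (hu₀ y hy).ne')
  have hux := hu₀ x hxK
  have hwx : 0 < w x :=
    (div_pos_iff_of_pos_right hux).mp ((div_pos hwp (hu₀ p hp)).trans_le (hmax hp))
  have hxA : x ∈ A := by
    by_contra h
    exact (hwA x ⟨hxK, h⟩).not_gt hwx
  refine ⟨x, hxA, u x / w x, by field_simp, ?_⟩
  filter_upwards [hA.mem_nhds hxA] with y hy
  have hle : w y / u y ≤ w x / u x := hmax (hAK hy)
  rw [div_le_div_iff₀ (hu₀ y (hAK hy)) hux] at hle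
  have : u x / w x * w y ≤ u y := by
    rw [div_mul_eq_mul_div, div_le_iff₀ hwx]
    linarith
  simp only [div_mul_cancel₀ _ hwx.ne']
  linarith

theorem IsLocalMin.deriv_deriv_nonneg {f : ℝ → ℝ} {a : ℝ} (hmin : IsLocalMin f a)
    (hf : ContinuousAt f a) : 0 ≤ deriv (deriv f) a := by
  by_contra! hneg
  have hmax := isLocalMax_of_deriv_deriv_neg hneg hmin.deriv_eq_zero hf
  have hconst : f =ᶠ[𝓝 a] fun _ => f a := by
    filter_upwards [hmin, hmax] with x h₁ h₂ using le_antisymm h₂ h₁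
  have : deriv f =ᶠ[𝓝 a] fun _ => 0 := by simpa using hconst.deriv
  simp [this.deriv_eq] at hneg

section NormedSpace
variable {E : Type*} [NormedAddCommGroup E] [NormedSpace ℝ E]

theorem ContDiffAt.eventually_differentiableAt {f : E → ℝ} {x : E} (hf : ContDiffAt ℝ 2 f x) :
    ∀ᶠ y in 𝓝 x, DifferentiableAt ℝ f y := by
  filter_upwards [hf.eventually (by norm_num)] with y hy
  exact hy.differentiableAt (by norm_num)

theorem ContDiffAt.differentiableAt_fderiv_apply {f : E → ℝ} {x : E} (hf : ContDiffAt ℝ 2 f x)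
    (v : E) : DifferentiableAt ℝ (fun y => fderiv ℝ f y v) x :=
  ((hf.fderiv_right (m := 1) le_rfl).differentiableAt one_ne_zero).clm_apply
    (differentiableAt_const v)

theorem IsLocalMin.fderiv_fderiv_apply_nonneg {f : E → ℝ} {x : E} (hmin : IsLocalMin f x)
    (hf : ContDiffAt ℝ 2 f x) (v : E) : 0 ≤ fderiv ℝ (fun y => fderiv ℝ f y v) x v := by
  set γ : ℝ → E := fun s => x + s • v
  have hγ : ∀ s, HasDerivAt γ v s := fun s =>
    (((hasDerivAt_id' s).smul_const v).const_add x).congr_deriv (one_smul ℝ v)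
  have hγ₀ : γ 0 = x := by simp [γ]
  have hderiv : deriv (f ∘ γ) =ᶠ[𝓝 0] fun s => fderiv ℝ f (γ s) v := by
    have hγx : Tendsto γ (𝓝 0) (𝓝 x) := hγ₀ ▸ (hγ 0).continuousAt.tendsto
    filter_upwards [hγx.eventually hf.eventually_differentiableAt] with s hs
    exact (hs.hasFDerivAt.comp_hasDerivAt s (hγ s)).deriv
  have hderiv₂ : HasDerivAt (fun s => fderiv ℝ f (γ s) v)
      (fderiv ℝ (fun y => fderiv ℝ f y v) x v) 0 :=
    (hf.differentiableAt_fderiv_apply v).hasFDerivAt.comp_hasDerivAt_of_eq 0 (hγ 0) hγ₀.symm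
  rw [← hderiv₂.deriv, ← hderiv.deriv_eq]
  exact ((hγ₀ ▸ hmin).comp_continuous (hγ 0).continuousAt).deriv_deriv_nonneg
    (hf.continuousAt.comp_of_eq (hγ 0).continuousAt hγ₀)

end NormedSpace

theorem lap_nonneg_of_isLocalMin {N : ℕ} {f : EuclideanSpace ℝ (Fin N) → ℝ}
    {x : EuclideanSpace ℝ (Fin N)} (hmin : IsLocalMin f x) (hf : ContDiffAt ℝ 2 f x) :
    0 ≤ lap f x :=
  Finset.sum_nonneg fun _ _ => hmin.fderiv_fderiv_apply_nonneg hf _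

theorem lap_sub_const_mul {N : ℕ} {f g : EuclideanSpace ℝ (Fin N) → ℝ}
    {x : EuclideanSpace ℝ (Fin N)} (hf : ContDiffAt ℝ 2 f x) (hg : ContDiffAt ℝ 2 g x) (t : ℝ) :
    lap (fun y => f y - t * g y) x = lap f x - t * lap g x := by
  rw [lap, lap, lap, Finset.mul_sum, ← Finset.sum_sub_distrib]
  refine Finset.sum_congr rfl fun i _ => ?_
  set v := EuclideanSpace.single i (1 : ℝ)
  have hfirst : (fun y => fderiv ℝ (fun y => f y - t * g y) y v)
      =ᶠ[𝓝 x] fun y => fderiv ℝ f y v - t * fderiv ℝ g y v := by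
    filter_upwards [hf.eventually_differentiableAt, hg.eventually_differentiableAt] with y hfy hgy
    rw [fderiv_fun_sub hfy (hgy.const_mul t), fderiv_const_mul hgy t]
    rfl
  have hf₂ := hf.differentiableAt_fderiv_apply v
  have hg₂ := hg.differentiableAt_fderiv_apply v
  rw [hfirst.fderiv_eq, fderiv_fun_sub hf₂ (hg₂.const_mul t), fderiv_const_mul hg₂ t]
  rfl

section InnerProductSpace
variable {E : Type*} [NormedAddCommGroup E] [InnerProductSpace ℝ E]

theorem HasDerivAt.hasFDerivAt_comp_norm_sq {F : ℝ → ℝ} {F' : ℝ} {y : E}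
    (hF : HasDerivAt F F' (‖y‖ ^ 2)) :
    HasFDerivAt (fun z => F (‖z‖ ^ 2)) (F' • (2 • innerSL ℝ y)) y :=
  hF.comp_hasFDerivAt y (hasStrictFDerivAt_norm_sq y).hasFDerivAt

theorem fderiv_fderiv_comp_norm_sq_apply {F F₁ F₂ : ℝ → ℝ}
    (hF : ∀ s, 0 < s → HasDerivAt F (F₁ s) s) (hF₁ : ∀ s, 0 < s → HasDerivAt F₁ (F₂ s) s)
    {x : E} (hx : x ≠ 0) (v : E) :
    fderiv ℝ (fun y => fderiv ℝ (fun z => F (‖z‖ ^ 2)) y v) x v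
      = 4 * F₂ (‖x‖ ^ 2) * ⟪x, v⟫ ^ 2 + 2 * F₁ (‖x‖ ^ 2) * ‖v‖ ^ 2 := by
  have hfirst : (fun y => fderiv ℝ (fun z => F (‖z‖ ^ 2)) y v)
      =ᶠ[𝓝 x] fun y => F₁ (‖y‖ ^ 2) * (2 * ⟪y, v⟫) := by
    filter_upwards [isOpen_ne.mem_nhds hx] with y hy
    rw [(hF _ (by positivity)).hasFDerivAt_comp_norm_sq.fderiv]
    simp
  have hinner : HasFDerivAt (fun y : E => 2 * ⟪y, v⟫) ((2 : ℝ) • innerSL ℝ v) x := by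
    simpa [real_inner_comm] using ((innerSL ℝ v).hasFDerivAt (x := x)).const_mul 2
  rw [hfirst.fderiv_eq, ((hF₁ _ (by positivity)).hasFDerivAt_comp_norm_sq.fun_mul hinner).fderiv]
  simp only [add_apply, smul_apply, coe_innerSL_apply,
    inner_self_eq_norm_sq_to_K, Real.ringHom_apply, smul_eq_mul, nsmul_eq_mul, Nat.cast_ofNat]
  ring

end InnerProductSpace

theorem lap_comp_norm_sq {N : ℕ} {F F₁ F₂ : ℝ → ℝ}
    (hF : ∀ s, 0 < s → HasDerivAt F (F₁ s) s) (hF₁ : ∀ s, 0 < s → HasDerivAt F₁ (F₂ s) s)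
    {x : EuclideanSpace ℝ (Fin N)} (hx : x ≠ 0) :
    lap (fun z => F (‖z‖ ^ 2)) x = 4 * ‖x‖ ^ 2 * F₂ (‖x‖ ^ 2) + 2 * N * F₁ (‖x‖ ^ 2) := by
  simp only [lap, fderiv_fderiv_comp_norm_sq_apply hF hF₁ hx, EuclideanSpace.inner_single_right,
    PiLp.norm_single, Finset.sum_add_distrib, ← Finset.mul_sum, EuclideanSpace.real_norm_sq_eq x,
    one_mul, norm_one, one_pow, mul_one, Finset.sum_const, Finset.card_univ, Fintype.card_fin,
    nsmul_eq_mul, conj_trivial]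
  ring

theorem lap_comp_log_norm {N : ℕ} {g g₁ g₂ : ℝ → ℝ}
    (hg : ∀ t, HasDerivAt g (g₁ t) t) (hg₁ : ∀ t, HasDerivAt g₁ (g₂ t) t)
    {x : EuclideanSpace ℝ (Fin N)} (hx : x ≠ 0) :
    lap (fun z => g (log ‖z‖)) x = (g₂ (log ‖x‖) + (N - 2) * g₁ (log ‖x‖)) / ‖x‖ ^ 2 := by
  have hlog : ∀ s : ℝ, 0 < s → HasDerivAt (fun s => log s / 2) (1 / (2 * s)) s :=
    fun s hs => ((hasDerivAt_log hs.ne').div_const 2).congr_deriv (by field_simp)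
  have hF : ∀ s : ℝ, 0 < s → HasDerivAt (fun s => g (log s / 2)) (g₁ (log s / 2) / (2 * s)) s :=
    fun s hs => ((hg _).comp s (hlog s hs)).congr_deriv (by ring)
  have hF₁ : ∀ s : ℝ, 0 < s → HasDerivAt (fun s => g₁ (log s / 2) / (2 * s))
      ((g₂ (log s / 2) - 2 * g₁ (log s / 2)) / (4 * s ^ 2)) s := fun s hs =>
    (((hg₁ _).comp s (hlog s hs)).div ((hasDerivAt_id s).const_mul 2) (by positivity)).congr_deriv
      (by simp only [Function.comp_apply, id]; field_simp; ring)
  have hnorm : ∀ z : EuclideanSpace ℝ (Fin N), log ‖z‖ = log (‖z‖ ^ 2) / 2 := fun z => by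
    rw [log_pow]
    ring
  simp only [hnorm]
  rw [lap_comp_norm_sq hF hF₁ hx]
  have : ‖x‖ ≠ 0 := norm_ne_zero_iff.mpr hx
  field_simp
  ring

noncomputable def annularEigenfunction (N : ℕ) (β R : ℝ) (x : EuclideanSpace ℝ (Fin N)) : ℝ :=
  exp (-(((N : ℝ) - 2) / 2) * (log ‖x‖ - log R)) * sin (β * (log ‖x‖ - log R))

section annularEigenfunction
variable {N : ℕ} {β R : ℝ} {x : EuclideanSpace ℝ (Fin N)}

theorem annularEigenfunction_contDiffAt (hx : x ≠ 0) :
    ContDiffAt ℝ 2 (annularEigenfunction N β R) x := by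
  have hlog : ContDiffAt ℝ 2 (fun z : EuclideanSpace ℝ (Fin N) => log ‖z‖) x :=
    (contDiffAt_norm ℝ hx).log (norm_ne_zero_iff.mpr hx)
  unfold annularEigenfunction
  fun_prop

theorem lap_annularEigenfunction (hx : x ≠ 0) :
    lap (annularEigenfunction N β R) x
      = -(((N : ℝ) - 2) ^ 2 / 4 + β ^ 2) * annularEigenfunction N β R x / ‖x‖ ^ 2 := by
  set α : ℝ := -(((N : ℝ) - 2) / 2)
  have hsin : ∀ t, HasDerivAt (fun t => exp (α * t) * sin (β * t))
      (α * (exp (α * t) * sin (β * t)) + β * (exp (α * t) * cos (β * t))) t :=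
    fun t => (((hasDerivAt_id t).const_mul α).exp.fun_mul
      ((hasDerivAt_id t).const_mul β).sin).congr_deriv (by simp only [id, mul_one]; ring)
  have hcos : ∀ t, HasDerivAt (fun t => exp (α * t) * cos (β * t))
      (α * (exp (α * t) * cos (β * t)) - β * (exp (α * t) * sin (β * t))) t :=
    fun t => (((hasDerivAt_id t).const_mul α).exp.fun_mul
      ((hasDerivAt_id t).const_mul β).cos).congr_deriv (by simp only [id, mul_one]; ring)
  have h : lap (annularEigenfunction N β R) x = _ :=
    lap_comp_log_norm (fun t => (hsin (t - log R)).comp_sub_const t _)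
      (fun t => (((hsin _).const_mul α).add ((hcos _).const_mul β)).comp_sub_const t _) hx
  rw [h]
  simp only [annularEigenfunction, α]
  ring

theorem annularEigenfunction_pos (hR : 0 < R) (hβ : 0 < β)
    (hx : ‖x‖ ∈ Set.Ioo R (R * exp (π / β))) : 0 < annularEigenfunction N β R x := by
  have hlog : log (R * exp (π / β)) = log R + π / β := by
    rw [log_mul hR.ne' (exp_pos _).ne', log_exp]
  have h₁ : 0 < log ‖x‖ - log R := sub_pos.2 (log_lt_log hR hx.1)
  have h₂ : log ‖x‖ - log R < π / β := by
    linarith [log_lt_log (hR.trans hx.1) hx.2]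
  refine mul_pos (exp_pos _) (sin_pos_of_pos_of_lt_pi (by positivity) ?_)
  rwa [lt_div_iff₀' hβ] at h₂

theorem annularEigenfunction_eq_zero (hR : 0 < R) (hβ : β ≠ 0)
    (hx : ‖x‖ = R ∨ ‖x‖ = R * exp (π / β)) : annularEigenfunction N β R x = 0 := by
  rcases hx with hx | hx
  · simp [annularEigenfunction, hx]
  · simp [annularEigenfunction, hx, log_mul hR.ne' (exp_pos _).ne', mul_div_cancel₀ _ hβ]

end annularEigenfunction

theorem exists_mem_annulus_neg_lap_mul_norm_sq_le {N : ℕ} (hN : 0 < N) {β R : ℝ} (hβ : 0 < β)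
    (hR : 0 < R) {u : EuclideanSpace ℝ (Fin N) → ℝ}
    (hu : ∀ x, ‖x‖ ∈ Set.Icc R (R * exp (π / β)) → ContDiffAt ℝ 2 u x ∧ 0 < u x) :
    ∃ x, ‖x‖ ∈ Set.Icc R (R * exp (π / β)) ∧
      -lap u x * ‖x‖ ^ 2 ≤ (((N : ℝ) - 2) ^ 2 / 4 + β ^ 2) * u x := by
  set ρ := R * exp (π / β)
  set K : Set (EuclideanSpace ℝ (Fin N)) := norm ⁻¹' Set.Icc R ρ
  set A : Set (EuclideanSpace ℝ (Fin N)) := norm ⁻¹' Set.Ioo R ρ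
  have hK : IsCompact K := (isCompact_closedBall 0 ρ).of_isClosed_subset
    (isClosed_Icc.preimage continuous_norm) fun x hx => mem_closedBall_zero_iff.2 hx.2
  have hAK : A ⊆ K := fun x hx => Set.Ioo_subset_Icc_self hx
  have hK₀ : ∀ x ∈ K, x ≠ 0 := fun x hx => norm_pos_iff.1 (hR.trans_le hx.1)
  have hw : ContinuousOn (annularEigenfunction N β R) K := fun x hx =>
    (annularEigenfunction_contDiffAt (hK₀ x hx)).continuousAt.continuousWithinAt
  have hw_boundary : ∀ x ∈ K \ A, annularEigenfunction N β R x ≤ 0 := by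
    rintro x ⟨⟨h₁, h₂⟩, hx⟩
    have : ‖x‖ = R ∨ ‖x‖ = ρ := by
      by_contra! h
      exact hx ⟨lt_of_le_of_ne h₁ h.1.symm, lt_of_le_of_ne h₂ h.2⟩
    exact (annularEigenfunction_eq_zero hR hβ.ne' this).le
  have hRρ : R < ρ := lt_mul_of_one_lt_right hR (one_lt_exp_iff.2 (by positivity))
  have : Nonempty (Fin N) := ⟨⟨0, hN⟩⟩
  obtain ⟨p, hp⟩ := exists_norm_eq (EuclideanSpace ℝ (Fin N)) (by positivity : 0 ≤ (R + ρ) / 2)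
  have hpA : p ∈ A := show ‖p‖ ∈ Set.Ioo R ρ from hp ▸ ⟨by linarith, by linarith⟩
  obtain ⟨x, hxA, t, hux, hmin⟩ :=
    hK.exists_isLocalMin_sub_mul (isOpen_Ioo.preimage continuous_norm) hAK
      (fun x hx => (hu x hx).1.continuousAt.continuousWithinAt) (fun x hx => (hu x hx).2) hw
      hw_boundary (hAK hpA) (annularEigenfunction_pos hR hβ hpA)
  have hx₀ := hK₀ x (hAK hxA)
  have hux₂ := (hu x (hAK hxA)).1
  have hwx₂ := annularEigenfunction_contDiffAt (β := β) (R := R) hx₀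
  refine ⟨x, hAK hxA, ?_⟩
  have hlap := lap_nonneg_of_isLocalMin hmin (hux₂.sub (contDiffAt_const.mul hwx₂))
  rw [lap_sub_const_mul hux₂ hwx₂, lap_annularEigenfunction hx₀] at hlap
  have : 0 < ‖x‖ ^ 2 := by positivity
  rw [hux]
  field_simp at hlap
  nlinarith

theorem stmt_12_general {N : ℕ} (hN : 3 ≤ N) (R₀ : ℝ)
    (c : EuclideanSpace ℝ (Fin N) → ℝ)
    (hmain : ((((N : ℝ) - 2) ^ 2 / 4 : ℝ) : EReal) <
      Filter.liminf
        (fun x : EuclideanSpace ℝ (Fin N) => ((‖x‖ ^ 2 * c x : ℝ) : EReal))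
        (Filter.comap (fun x : EuclideanSpace ℝ (Fin N) => ‖x‖) Filter.atTop)) :
    ¬ ∃ u : EuclideanSpace ℝ (Fin N) → ℝ,
        ContDiffOn ℝ 2 u {x | R₀ < ‖x‖} ∧ (∀ x, R₀ < ‖x‖ → 0 < u x) ∧
          ∀ x, R₀ < ‖x‖ → c x * u x ≤ -(lap u x) := by
  rintro ⟨u, hu, hu₀, hsuper⟩
  obtain ⟨y, hy, hyc⟩ := EReal.lt_iff_exists_real_btwn.1 hmain
  obtain ⟨R, hRy⟩ := eventually_atTop.1 <|
    (eventually_comap.1 (eventually_lt_of_lt_liminf hyc)).and (eventually_gt_atTop (max R₀ 0))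
  have hR₀R : R₀ < R := (le_max_left _ _).trans_lt (hRy R le_rfl).2
  have hR : 0 < R := (le_max_right _ _).trans_lt (hRy R le_rfl).2
  have hgap : 0 < y - ((N : ℝ) - 2) ^ 2 / 4 := sub_pos.2 (by exact_mod_cast hy)
  set β := √((y - ((N : ℝ) - 2) ^ 2 / 4) / 2)
  have hβ : 0 < β := sqrt_pos.2 (by positivity)
  have hβ₂ : β ^ 2 = (y - ((N : ℝ) - 2) ^ 2 / 4) / 2 := sq_sqrt (by positivity)
  obtain ⟨x, hx, hlap⟩ := exists_mem_annulus_neg_lap_mul_norm_sq_le (u := u) (by omega) hβ hR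
    fun x hx => ⟨hu.contDiffAt ((isOpen_lt continuous_const continuous_norm).mem_nhds
      (hR₀R.trans_le hx.1)), hu₀ x (hR₀R.trans_le hx.1)⟩
  have hxc : y < ‖x‖ ^ 2 * c x := by exact_mod_cast (hRy ‖x‖ hx.1).1 x rfl
  have hux := hu₀ x (hR₀R.trans_le hx.1)
  have hsx := hsuper x (hR₀R.trans_le hx.1)
  nlinarith [mul_le_mul_of_nonneg_right hsx (sq_nonneg ‖x‖)]

theorem stmt_12 {N : ℕ} (hN : 3 ≤ N) (R₀ : ℝ) (hR₀ : 0 < R₀)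
    (c : EuclideanSpace ℝ (Fin N) → ℝ) (hc : ContinuousOn c {x | R₀ < ‖x‖})
    (hmain : ((((N : ℝ) - 2) ^ 2 / 4 : ℝ) : EReal) <
      Filter.liminf
        (fun x : EuclideanSpace ℝ (Fin N) => ((‖x‖ ^ 2 * c x : ℝ) : EReal))
        (Filter.comap (fun x : EuclideanSpace ℝ (Fin N) => ‖x‖) Filter.atTop)) :
    ¬ ∃ u : EuclideanSpace ℝ (Fin N) → ℝ,
        ContDiffOn ℝ 2 u {x | R₀ < ‖x‖} ∧ (∀ x, R₀ < ‖x‖ → 0 < u x) ∧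
          ∀ x, R₀ < ‖x‖ → c x * u x ≤ -(lap u x) :=
  stmt_12_general hN R₀ c hmain
end
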